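/- The nonachievable region R̄ = {λ · s(x, N̄) : λ > 1, x ∈ B}, i.e. the set of positive scalar multiples (with factor strictly greater than 1) of boundary throughput vectors, is a convex subset of ℝ^n. -/

import Mathlib

open Finset

noncomputable def Xfun (n : ℕ) (a : ℝ) (x N : Fin n → ℝ) : ℝ :=
  a + (∑ k, (N k - 1) * x k) + (∏ k, (1 + x k)) - 1

noncomputable def sVec (n : ℕ) (a : ℝ) (L x N : Fin n → ℝ) : Fin n → ℝ :=
  fun i => N i * L i * x i / Xfun n a x N

noncomputable def hfun (n : ℕ) (a : ℝ) (x : Fin n → ℝ) : ℝ :=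
  (∑ i, x i / (1 + x i)) + (1 - a) / ∏ j, (1 + x j)

def rateRegion (n : ℕ) (a : ℝ) (L Nlo Nhi : Fin n → ℝ) : Set (Fin n → ℝ) :=
  {u | ∃ x N : Fin n → ℝ, (∀ i, 0 ≤ x i) ∧ (∀ i, Nlo i ≤ N i ∧ N i ≤ Nhi i) ∧
    u = sVec n a L x N}

noncomputable def alpha (n : ℕ) (L Nhi xs : Fin n → ℝ) (i : Fin n) : ℝ :=
  (Nhi i - 1 + ∏ j ∈ Finset.univ.erase i, (1 + xs j)) / (L i * Nhi i)

def Cset (n : ℕ) (L Nhi xs : Fin n → ℝ) : Set (Fin n → ℝ) :=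
  {sv | (∀ i, 0 ≤ sv i) ∧ ∑ i, alpha n L Nhi xs i * sv i ≤ 1}

/-!
Put `u = (1 + x)⁻¹` coordinatewise. Then `h(x) = 1` says `∑ u = n - 1 + (1 - a) ∏ u`, and for two
points `u, v` of this surface `n - 1 + ∏ u / ∏ v ≤ ∑ u / v`. This is the sign of the derivative at
`0` of `ψ(t) = log ((∑ m - (n - 1)) / ∏ m)` along `m = v + t (u - v)`: `ψ` equals `log (1 - a)` at
both ends and, by Cauchy–Schwarz, `ψ'' > 0` at every critical point, so `ψ ≤ log (1 - a)` on
`[0, 1]`.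

In terms of throughputs, the inequality says that `α(z) ⬝ s(x, N̄) ≥ 1` for all `x, z ∈ B`, with
equality at `x = z`: the hyperplane `α(z) ⬝ s = 1` supports the boundary at `s(z, N̄)`. A convex
combination `w` of `λ₁ s(x₁, N̄)` and `λ₂ s(x₂, N̄)` is, by the intermediate value theorem along
its ray, a multiple `μ s(z, N̄)` with `z ∈ B`, and then `μ = α(z) ⬝ w ≥ p λ₁ + q λ₂ > 1`.
-/

open Set Filter Topology Real

theorem sq_sum_lt_sum_sq_of_sum_mul_eq {ι : Type*} [Fintype ι] {c g : ι → ℝ}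
    (hg : ∀ i, 0 ≤ g i) (hcg : ∑ i, c i * g i = (∑ i, g i) * ∑ i, c i)
    {j k : ι} (hjk : j ≠ k) (hcj : c j ≠ 0) (hgk : 0 < g k) :
    (∑ i, c i) ^ 2 < ∑ i, c i ^ 2 := by
  classical
  set S := ∑ i, g i
  have hgj : g j < S := by
    have : g j + g k ≤ S := by
      simpa [sum_pair hjk] using
        sum_le_sum_of_subset_of_nonneg (Finset.subset_univ {j, k}) fun i _ _ => hg i
    linarith
  have hS : 0 < S := (hg j).trans_lt hgj
  have hCS : (∑ i, c i * g i) ^ 2 ≤ (∑ i, c i ^ 2 * g i) * S :=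
    sum_sq_le_sum_mul_sum_of_sq_le_mul _ (fun i _ => mul_nonneg (sq_nonneg _) (hg i))
      (fun i _ => hg i) fun i _ => by rw [mul_pow, sq (g i), mul_assoc]
  have hlt : ∑ i, c i ^ 2 * g i < (∑ i, c i ^ 2) * S := by
    rw [sum_mul]
    exact sum_lt_sum (fun i _ => mul_le_mul_of_nonneg_left (single_le_sum (fun i _ => hg i)
      (mem_univ i)) (sq_nonneg _)) ⟨j, mem_univ j, by gcongr⟩
  rw [hcg] at hCS
  have : S ^ 2 * (∑ i, c i) ^ 2 < S ^ 2 * ∑ i, c i ^ 2 := by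
    nlinarith [mul_lt_mul_of_pos_right hlt hS]
  exact lt_of_mul_lt_mul_left this (sq_nonneg S)

theorem le_max_of_critical_deriv_pos {ψ ψ' ψ'' : ℝ → ℝ} {a b : ℝ}
    (hψ : ∀ t ∈ Icc a b, HasDerivAt ψ (ψ' t) t)
    (hψ' : ∀ t ∈ Ioo a b, HasDerivAt ψ' (ψ'' t) t)
    (hcrit : ∀ t ∈ Ioo a b, ψ' t = 0 → 0 < ψ'' t) :
    ∀ t ∈ Icc a b, ψ t ≤ max (ψ a) (ψ b) := by
  by_contra! ⟨s, hs, hψs⟩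
  obtain ⟨T, hT, hmax⟩ := isCompact_Icc.exists_isMaxOn ⟨s, hs⟩
    fun t ht => (hψ t ht).continuousAt.continuousWithinAt
  have hsT : ψ s ≤ ψ T := hmax hs
  have hTab : T ∈ Ioo a b := by
    rw [max_lt_iff] at hψs
    exact ⟨hT.1.lt_of_ne (by rintro rfl; linarith), hT.2.lt_of_ne (by rintro rfl; linarith)⟩
  have hcritT : ψ' T = 0 :=
    (hmax.isLocalMax (Icc_mem_nhds hTab.1 hTab.2)).hasDerivAt_eq_zero (hψ T hT)
  have hright : ∀ᶠ t in 𝓝[>] T, 0 < ψ' t ∧ t < b := by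
    have hslope := ((hψ' T hTab).tendsto_slope.mono_left (nhdsGT_le_nhdsNE T)).eventually
      (eventually_gt_nhds (hcrit T hTab hcritT))
    filter_upwards [hslope, self_mem_nhdsWithin, nhdsWithin_le_nhds (eventually_lt_nhds hTab.2)]
      with t h1 h2 h3 using ⟨pos_of_slope_pos h2 h1 hcritT, h3⟩
  obtain ⟨ε, hε, hsub⟩ := mem_nhdsGT_iff_exists_Ioo_subset.1 hright
  obtain ⟨t, htT, htε⟩ := exists_between (α := ℝ) hε
  have htb : t < b := (hsub ⟨htT, htε⟩).2
  -- mean value theorem on `[T, t]`, where `ψ' > 0`, against the maximality of `ψ T`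
  obtain ⟨ξ, hξ, hξslope⟩ := exists_hasDerivAt_eq_slope ψ ψ' htT
    (fun r hr => (hψ r ⟨hT.1.trans hr.1, hr.2.trans htb.le⟩).continuousAt.continuousWithinAt)
    fun r hr => hψ r ⟨hT.1.trans hr.1.le, hr.2.le.trans htb.le⟩
  have hpos := (hsub ⟨hξ.1, hξ.2.trans htε⟩).1
  have hle : ψ t ≤ ψ T := hmax ⟨hT.1.trans htT.le, htb.le⟩
  rw [hξslope, div_pos_iff_of_pos_right (sub_pos.2 htT)] at hpos
  linarith

theorem HasDerivAt.nonpos_of_isMaxOn_Icc {f : ℝ → ℝ} {f' a b : ℝ} (hab : a < b)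
    (hf : HasDerivAt f f' a) (hmax : IsMaxOn f (Icc a b) a) : f' ≤ 0 := by
  have := hmax.localize.hasFDerivWithinAt_nonpos hf.hasDerivWithinAt.hasFDerivWithinAt
    (mem_posTangentConeAt_of_segment_subset (y := b - a) (by simp [segment_eq_Icc, hab.le]))
  rw [ContinuousLinearMap.toSpanSingleton_apply, smul_eq_mul] at this
  exact nonpos_of_mul_nonpos_right this (sub_pos.2 hab)

theorem hasDerivAt_log_add_mul {α β t : ℝ} (h : α + t * β ≠ 0) :
    HasDerivAt (fun s => log (α + s * β)) (β / (α + t * β)) t := by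
  simpa using (((hasDerivAt_id t).mul_const β).const_add α).log h

theorem hasDerivAt_div_add_mul {α β t : ℝ} (h : α + t * β ≠ 0) :
    HasDerivAt (fun s => β / (α + s * β)) (-(β / (α + t * β)) ^ 2) t := by
  refine ((hasDerivAt_const t β).fun_div
    (((hasDerivAt_id t).mul_const β).const_add α) h).congr_deriv ?_
  simp only [id, one_mul, zero_mul, zero_sub, neg_div, sq, div_mul_div_comm]

theorem add_mul_mem_of_convex {S : Set ℝ} (hS : Convex ℝ S) {α β t : ℝ} (h0 : α ∈ S)
    (h1 : α + β ∈ S) (ht : t ∈ Icc (0 : ℝ) 1) : α + t * β ∈ S := by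
  convert hS h0 h1 (sub_nonneg.2 ht.2) ht.1 (sub_add_cancel 1 t) using 1
  simp only [smul_eq_mul]; ring

section LogRatio

variable {ι : Type*} [Fintype ι]

/-- `log ((∑ m - (card ι - 1)) / ∏ m)` along the line `m = v + t d`. -/
noncomputable def logRatio (v d : ι → ℝ) (t : ℝ) : ℝ :=
  log (∑ i, v i - (Fintype.card ι - 1) + t * ∑ i, d i) - ∑ i, log (v i + t * d i)

noncomputable def logRatioDeriv (v d : ι → ℝ) (t : ℝ) : ℝ :=
  (∑ i, d i) / (∑ i, v i - (Fintype.card ι - 1) + t * ∑ i, d i) - ∑ i, d i / (v i + t * d i)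

variable {v d : ι → ℝ} {t : ℝ}

theorem hasDerivAt_logRatio (hσ : ∑ i, v i - (Fintype.card ι - 1) + t * ∑ i, d i ≠ 0)
    (hm : ∀ i, v i + t * d i ≠ 0) : HasDerivAt (logRatio v d) (logRatioDeriv v d t) t :=
  (hasDerivAt_log_add_mul hσ).fun_sub
    (HasDerivAt.fun_sum (u := univ) fun i _ => hasDerivAt_log_add_mul (hm i))

theorem hasDerivAt_logRatioDeriv (hσ : ∑ i, v i - (Fintype.card ι - 1) + t * ∑ i, d i ≠ 0)
    (hm : ∀ i, v i + t * d i ≠ 0) :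
    HasDerivAt (logRatioDeriv v d) (∑ i, (d i / (v i + t * d i)) ^ 2 -
      ((∑ i, d i) / (∑ i, v i - (Fintype.card ι - 1) + t * ∑ i, d i)) ^ 2) t := by
  refine ((hasDerivAt_div_add_mul hσ).fun_sub (HasDerivAt.fun_sum (u := univ) fun i _ =>
    hasDerivAt_div_add_mul (hm i))).congr_deriv ?_
  rw [sum_neg_distrib]
  ring

theorem logRatio_eq_log {K : ℝ} (hK : 0 < K) (hm : ∀ i, 0 < v i + t * d i)
    (hsurf : ∑ i, (v i + t * d i) = Fintype.card ι - 1 + K * ∏ i, (v i + t * d i)) :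
    logRatio v d t = log K := by
  have hσ : ∑ i, v i - (Fintype.card ι - 1) + t * ∑ i, d i = K * ∏ i, (v i + t * d i) := by
    rw [mul_sum, ← add_sub_right_comm, ← sum_add_distrib, hsurf]; ring
  rw [logRatio, hσ, log_mul hK.ne' (prod_pos fun i _ => hm i).ne',
    log_prod fun i _ => (hm i).ne', add_sub_cancel_right]

theorem sq_lt_of_logRatioDeriv_eq_zero (hσ : ∑ i, v i - (Fintype.card ι - 1) + t * ∑ i, d i ≠ 0)
    (hm : ∀ i, v i + t * d i ∈ Set.Ioc 0 1) {j k : ι} (hjk : j ≠ k) (hj : d j ≠ 0)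
    (hk : v k + t * d k < 1) (hcrit : logRatioDeriv v d t = 0) :
    ((∑ i, d i) / (∑ i, v i - (Fintype.card ι - 1) + t * ∑ i, d i)) ^ 2 <
      ∑ i, (d i / (v i + t * d i)) ^ 2 := by
  set σ := ∑ i, v i - (Fintype.card ι - 1) + t * ∑ i, d i
  set m : ι → ℝ := fun i => v i + t * d i
  have hcrit : (∑ i, d i) / σ = ∑ i, d i / m i := sub_eq_zero.1 hcrit
  have hcm : ∑ i, d i / m i * m i = σ * ∑ i, d i / m i := by
    rw [← hcrit, mul_div_cancel₀ _ hσ]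
    exact sum_congr rfl fun i _ => div_mul_cancel₀ _ (hm i).1.ne'
  have hsum_m : ∑ i, m i = Fintype.card ι - 1 + σ := by
    simp only [m, σ, sum_add_distrib, ← mul_sum]; ring
  rw [hcrit]
  refine sq_sum_lt_sum_sq_of_sum_mul_eq (g := fun i => 1 - m i)
    (fun i => sub_nonneg.2 (hm i).2) ?_ hjk (div_ne_zero hj (hm j).1.ne') (sub_pos.2 hk)
  simp only [mul_sub, mul_one, sum_sub_distrib, hcm, hsum_m, sum_const, card_univ, nsmul_eq_mul]
  ring

theorem logRatio_le_max (hσ0 : 0 < ∑ i, v i - (Fintype.card ι - 1))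
    (hσ1 : 0 < ∑ i, v i - (Fintype.card ι - 1) + ∑ i, d i) (hv : ∀ i, v i ∈ Set.Ioc 0 1)
    (hvd : ∀ i, v i + d i ∈ Set.Ioc 0 1) {j k : ι} (hjk : j ≠ k) (hj : d j ≠ 0) (hk : d k ≠ 0) :
    ∀ t ∈ Icc (0 : ℝ) 1, logRatio v d t ≤ max (logRatio v d 0) (logRatio v d 1) := by
  have hm : ∀ t ∈ Icc (0 : ℝ) 1, ∀ i, v i + t * d i ∈ Set.Ioc 0 1 := fun t ht i =>
    add_mul_mem_of_convex (convex_Ioc 0 1) (hv i) (hvd i) ht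
  have hσ : ∀ t ∈ Icc (0 : ℝ) 1, 0 < ∑ i, v i - (Fintype.card ι - 1) + t * ∑ i, d i :=
    fun t ht => add_mul_mem_of_convex (convex_Ioi 0) hσ0 hσ1 ht
  refine le_max_of_critical_deriv_pos
    (fun t ht => hasDerivAt_logRatio (hσ t ht).ne' fun i => (hm t ht i).1.ne')
    (fun t ht => hasDerivAt_logRatioDeriv (hσ t (Ioo_subset_Icc_self ht)).ne'
      fun i => (hm t (Ioo_subset_Icc_self ht) i).1.ne') fun t ht hcrit => ?_
  have ht' := Ioo_subset_Icc_self ht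
  have hk1 : v k + t * d k < 1 := by
    rcases hk.lt_or_gt with h | h <;> nlinarith [ht.1, ht.2, (hv k).2, (hvd k).2]
  exact sub_pos.2 (sq_lt_of_logRatioDeriv_eq_zero (hσ t ht').ne' (hm t ht') hjk hj hk1 hcrit)

theorem exists_pair_ne_of_sum_eq_card_sub_one_add_mul_prod {K : ℝ} (hK : K < 1) {u v : ι → ℝ}
    (hu0 : ∀ j, 0 ≤ u j) (hu1 : ∀ j, u j ≤ 1)
    (hu : ∑ j, u j = Fintype.card ι - 1 + K * ∏ j, u j)
    (hv : ∑ j, v j = Fintype.card ι - 1 + K * ∏ j, v j) (huv : u ≠ v) :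
    ∃ j k, j ≠ k ∧ u j ≠ v j ∧ u k ≠ v k := by
  classical
  obtain ⟨j, hj⟩ := Function.ne_iff.1 huv
  by_contra! h
  have hrest : ∀ i ∈ univ.erase j, u i = v i := fun i hi => h j i (ne_of_mem_erase hi).symm hj
  set P := ∏ i ∈ univ.erase j, u i
  have hP0 : 0 ≤ P := prod_nonneg fun i _ => hu0 i
  have hP1 : P ≤ 1 := prod_le_one (fun i _ => hu0 i) fun i _ => hu1 i
  have hsum : ∑ i, u i - ∑ i, v i = u j - v j := by
    rw [← add_sum_erase _ u (mem_univ j), ← add_sum_erase _ v (mem_univ j), sum_congr rfl hrest]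
    ring
  have hprod : ∏ i, u i - ∏ i, v i = (u j - v j) * P := by
    rw [← mul_prod_erase _ u (mem_univ j), ← mul_prod_erase _ v (mem_univ j),
      ← prod_congr rfl hrest]
    ring
  have : (u j - v j) * (1 - K * P) = 0 := by linear_combination -hsum + hu - hv + K * hprod
  rcases mul_eq_zero.1 this with h0 | h0
  · exact hj (sub_eq_zero.1 h0)
  · nlinarith [mul_nonneg (sub_nonneg.2 hK.le) hP0]

theorem card_sub_one_add_prod_div_prod_le_sum_div {K : ℝ} (hK0 : 0 < K) (hK1 : K < 1)
    {u v : ι → ℝ} (hu0 : ∀ j, 0 < u j) (hu1 : ∀ j, u j ≤ 1) (hv0 : ∀ j, 0 < v j)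
    (hv1 : ∀ j, v j ≤ 1) (hu : ∑ j, u j = Fintype.card ι - 1 + K * ∏ j, u j)
    (hv : ∑ j, v j = Fintype.card ι - 1 + K * ∏ j, v j) :
    Fintype.card ι - 1 + (∏ j, u j) / ∏ j, v j ≤ ∑ j, u j / v j := by
  have hU : 0 < ∏ j, u j := prod_pos fun j _ => hu0 j
  have hV : 0 < ∏ j, v j := prod_pos fun j _ => hv0 j
  rcases eq_or_ne u v with rfl | huv
  · simp [div_self (hu0 _).ne', div_self hU.ne']
  obtain ⟨j, k, hjk, hj, hk⟩ :=
    exists_pair_ne_of_sum_eq_card_sub_one_add_mul_prod hK1 (fun j => (hu0 j).le) hu1 hu hv huv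
  set d : ι → ℝ := fun i => u i - v i
  have hσ0 : ∑ i, v i - (Fintype.card ι - 1) = K * ∏ i, v i := by rw [hv]; ring
  have hD : ∑ i, d i = K * ∏ i, u i - K * ∏ i, v i := by
    simp only [d, sum_sub_distrib, hu, hv]; ring
  have hvd : ∀ i, v i + d i = u i := fun i => add_sub_cancel _ _
  have hend : logRatio v d 1 = logRatio v d 0 := by
    rw [logRatio_eq_log hK0 (by simpa [hvd] using hu0) (by simpa [hvd] using hu),
      logRatio_eq_log hK0 (by simpa using hv0) (by simpa using hv)]
  have hmax : IsMaxOn (logRatio v d) (Icc 0 1) 0 := fun t ht => by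
    have := logRatio_le_max (by rw [hσ0]; positivity)
      (by rw [hσ0, hD]; linarith [mul_pos hK0 hU]) (fun i => ⟨hv0 i, hv1 i⟩)
      (fun i => by rw [hvd]; exact ⟨hu0 i, hu1 i⟩) hjk (sub_ne_zero.2 hj) (sub_ne_zero.2 hk) t ht
    rwa [hend, max_self] at this
  have hderiv : logRatioDeriv v d 0 ≤ 0 :=
    (hasDerivAt_logRatio (by simpa [hσ0] using (mul_pos hK0 hV).ne')
      (by simpa using fun i => (hv0 i).ne')).nonpos_of_isMaxOn_Icc one_pos hmax
  have hDσ : (∑ i, d i) / (K * ∏ i, v i) = (∏ i, u i) / ∏ i, v i - 1 := by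
    rw [hD, sub_div, div_self (mul_pos hK0 hV).ne', mul_div_mul_left _ _ hK0.ne']
  have hdv : ∑ i, d i / v i = ∑ i, u i / v i - Fintype.card ι := by
    simp [d, sub_div, div_self (hv0 _).ne', sum_sub_distrib]
  simp only [logRatioDeriv, zero_mul, add_zero, hσ0, hDσ, hdv] at hderiv
  linarith

end LogRatio

section Boundary

variable {n : ℕ} {a : ℝ}

theorem prod_erase_one_add_eq_mul_inv {x : Fin n → ℝ} (hx : ∀ i, 0 ≤ x i) (i : Fin n) :
    ∏ j ∈ univ.erase i, (1 + x j) = (∏ j, (1 + x j)) * (1 + x i)⁻¹ := by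
  rw [← mul_prod_erase _ _ (mem_univ i), mul_comm, inv_mul_cancel_left₀ (by linarith [hx i])]

theorem sum_inv_one_add_eq_of_hfun_eq_one {x : Fin n → ℝ} (hx : ∀ i, 0 ≤ x i)
    (hh : hfun n a x = 1) :
    ∑ i, (1 + x i)⁻¹ = Fintype.card (Fin n) - 1 + (1 - a) * ∏ i, (1 + x i)⁻¹ := by
  have hx' : ∀ i, x i / (1 + x i) = 1 - (1 + x i)⁻¹ := fun i => by
    field_simp [(by linarith [hx i] : 1 + x i ≠ 0)]; ring
  simp only [hfun, hx', sum_sub_distrib, sum_const, card_univ, nsmul_eq_mul, mul_one,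
    div_eq_mul_inv, ← prod_inv_distrib] at hh
  linarith

theorem sum_mul_prod_erase_eq_of_hfun_eq_one {x : Fin n → ℝ} (hx : ∀ i, 0 ≤ x i)
    (hh : hfun n a x = 1) :
    ∑ i, x i * ∏ j ∈ univ.erase i, (1 + x j) = ∏ j, (1 + x j) - (1 - a) := by
  have hx' : ∀ i, 1 + x i ≠ 0 := fun i => by linarith [hx i]
  have hP : ∏ j, (1 + x j) ≠ 0 := prod_ne_zero_iff.2 fun j _ => hx' j
  have hxu : ∀ i, x i * (1 + x i)⁻¹ = 1 - (1 + x i)⁻¹ := fun i => by field_simp [hx' i]; ring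
  have hsum := sum_inv_one_add_eq_of_hfun_eq_one hx hh
  simp only [prod_erase_one_add_eq_mul_inv hx, mul_left_comm (x _), ← mul_sum, hxu, sum_sub_distrib,
    sum_const, card_univ, nsmul_eq_mul, mul_one, hsum, prod_inv_distrib]
  field_simp
  ring

theorem prod_one_add_sub_le_sum_mul_prod_erase (ha0 : 0 < a) (ha1 : a < 1) {x z : Fin n → ℝ}
    (hx : ∀ i, 0 ≤ x i) (hz : ∀ i, 0 ≤ z i) (hhx : hfun n a x = 1) (hhz : hfun n a z = 1) :
    ∏ j, (1 + x j) - (1 - a) ≤ ∑ i, x i * ∏ j ∈ univ.erase i, (1 + z j) := by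
  have hx' : ∀ i, 0 < 1 + x i := fun i => by linarith [hx i]
  have hz' : ∀ i, 0 < 1 + z i := fun i => by linarith [hz i]
  have hu := sum_inv_one_add_eq_of_hfun_eq_one hz hhz
  set u : Fin n → ℝ := fun i => (1 + z i)⁻¹
  set v : Fin n → ℝ := fun i => (1 + x i)⁻¹
  have hU : 0 < ∏ i, u i := prod_pos fun i _ => inv_pos.2 (hz' i)
  have hV : ∏ i, v i = (∏ i, (1 + x i))⁻¹ := prod_inv_distrib _
  have key := card_sub_one_add_prod_div_prod_le_sum_div (K := 1 - a) (by linarith) (by linarith)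
    (u := u) (v := v) (fun i => inv_pos.2 (hz' i))
    (fun i => inv_le_one_of_one_le₀ (by linarith [hz i])) (fun i => inv_pos.2 (hx' i))
    (fun i => inv_le_one_of_one_le₀ (by linarith [hx i])) hu
    (sum_inv_one_add_eq_of_hfun_eq_one hx hhx)
  have hxu : ∀ i, x i * u i = u i / v i - u i := fun i => by
    simp only [u, v]; field_simp [(hx' i).ne', (hz' i).ne']; ring
  have hrhs : ∑ i, x i * ∏ j ∈ univ.erase i, (1 + z j) = (∏ i, u i)⁻¹ * ∑ i, x i * u i := by
    simp only [prod_erase_one_add_eq_mul_inv hz, mul_left_comm (x _), ← mul_sum, u,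
      prod_inv_distrib, inv_inv]
  rw [hV, div_inv_eq_mul] at key
  calc ∏ j, (1 + x j) - (1 - a)
      = (∏ i, u i)⁻¹ * ((∏ i, u i) * ∏ j, (1 + x j) - (1 - a) * ∏ i, u i) := by
        field_simp
    _ ≤ ∑ i, x i * ∏ j ∈ univ.erase i, (1 + z j) := by
        rw [hrhs, sum_congr rfl fun i _ => hxu i, sum_sub_distrib, hu]
        exact mul_le_mul_of_nonneg_left (by linarith) (inv_pos.2 hU).le

theorem exists_pair_pos_of_hfun_eq_one (ha : 0 < a) {x : Fin n → ℝ} (hx : ∀ i, 0 ≤ x i)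
    (hh : hfun n a x = 1) : ∃ i j, i ≠ j ∧ 0 < x i ∧ 0 < x j := by
  by_contra! h
  obtain ⟨i, hi⟩ : ∃ i, ∀ j ≠ i, x j = 0 := by
    by_cases hex : ∃ i, 0 < x i
    · obtain ⟨i, hi⟩ := hex
      exact ⟨i, fun j hj => le_antisymm (h i j hj.symm hi) (hx j)⟩
    · simp only [not_exists, not_lt] at hex
      rcases n with _ | n
      · simp [hfun] at hh; linarith
      · exact ⟨0, fun j _ => le_antisymm (hex j) (hx j)⟩
  have hsum : ∑ j, x j / (1 + x j) = x i / (1 + x i) :=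
    sum_eq_single i (fun j _ hj => by simp [hi j hj]) (by simp)
  have hprod : ∏ j, (1 + x j) = 1 + x i :=
    prod_eq_single i (fun j _ hj => by simp [hi j hj]) (by simp)
  rw [hfun, hsum, hprod, ← add_div, div_eq_one_iff_eq (by linarith [hx i])] at hh
  linarith

theorem one_le_hfun (ha : a ≤ 1) {x : Fin n → ℝ} (hx : ∀ k, 0 ≤ x k) {i j : Fin n} (hij : i ≠ j)
    (hi : 1 ≤ x i) (hj : 1 ≤ x j) : 1 ≤ hfun n a x := by
  have hhalf : ∀ k, 1 ≤ x k → 1 / 2 ≤ x k / (1 + x k) := fun k hk => by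
    rw [le_div_iff₀ (by linarith)]; linarith
  calc (1 : ℝ) ≤ ∑ k ∈ {i, j}, x k / (1 + x k) := by
        rw [sum_pair hij]; linarith [hhalf i hi, hhalf j hj]
    _ ≤ ∑ k, x k / (1 + x k) :=
        sum_le_sum_of_subset_of_nonneg (subset_univ _) fun k _ _ =>
          div_nonneg (hx k) (by linarith [hx k])
    _ ≤ hfun n a x :=
        le_add_of_nonneg_right (div_nonneg (by linarith)
          (prod_nonneg fun k _ => by linarith [hx k]))

theorem exists_pos_hfun_smul_eq_one (ha0 : 0 < a) (ha1 : a ≤ 1) {d : Fin n → ℝ}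
    (hd : ∀ k, 0 ≤ d k) {i j : Fin n} (hij : i ≠ j) (hi : 0 < d i) (hj : 0 < d j) :
    ∃ c : ℝ, 0 < c ∧ hfun n a (c • d) = 1 := by
  set C := max (d i)⁻¹ (d j)⁻¹
  have hC : 0 ≤ C := (inv_pos.2 hi).le.trans (le_max_left _ _)
  have hpos : ∀ c ∈ Icc 0 C, ∀ k, 0 < 1 + c * d k := fun c hc k => by
    nlinarith [mul_nonneg hc.1 (hd k)]
  have hcont : ContinuousOn (fun c : ℝ => hfun n a (c • d)) (Icc 0 C) := by
    simp only [hfun, Pi.smul_apply, smul_eq_mul]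
    fun_prop (disch := first
      | exact fun c hc => (hpos c hc _).ne'
      | exact fun c hc => (prod_pos fun k _ => hpos c hc k).ne')
  have hH0 : hfun n a ((0 : ℝ) • d) = 1 - a := by simp [hfun]
  have hHC : 1 ≤ hfun n a (C • d) := by
    refine one_le_hfun ha1 (fun k => mul_nonneg hC (hd k)) hij ?_ ?_ <;>
      simp only [Pi.smul_apply, smul_eq_mul]
    · rw [← inv_mul_cancel₀ hi.ne']; gcongr; exact le_max_left _ _
    · rw [← inv_mul_cancel₀ hj.ne']; gcongr; exact le_max_right _ _
  obtain ⟨c, hc, hc1⟩ := intermediate_value_Icc hC hcont ⟨by rw [hH0]; linarith, hHC⟩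
  refine ⟨c, hc.1.lt_of_ne ?_, hc1⟩
  rintro rfl
  linarith [hc1.symm.trans hH0]

end Boundary

section Throughput

variable {n : ℕ} {a : ℝ} {L N : Fin n → ℝ}

theorem Xfun_pos (ha : 0 < a) {x : Fin n → ℝ} (hx : ∀ i, 0 ≤ x i) (hN : ∀ i, 1 ≤ N i) :
    0 < Xfun n a x N := by
  have h1 : 1 ≤ ∏ k, (1 + x k) := one_le_prod fun k _ => by linarith [hx k]
  have h2 : 0 ≤ ∑ k, (N k - 1) * x k :=
    sum_nonneg fun k _ => mul_nonneg (by linarith [hN k]) (hx k)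
  unfold Xfun; linarith

theorem sVec_nonneg (ha : 0 < a) (hL : ∀ i, 0 < L i) (hN : ∀ i, 1 ≤ N i) {x : Fin n → ℝ}
    (hx : ∀ i, 0 ≤ x i) (i : Fin n) : 0 ≤ sVec n a L x N i :=
  div_nonneg (mul_nonneg (mul_nonneg (by linarith [hN i]) (hL i).le) (hx i)) (Xfun_pos ha hx hN).le

theorem sVec_pos (ha : 0 < a) (hL : ∀ i, 0 < L i) (hN : ∀ i, 1 ≤ N i) {x : Fin n → ℝ}
    (hx : ∀ i, 0 ≤ x i) {i : Fin n} (hi : 0 < x i) : 0 < sVec n a L x N i :=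
  div_pos (mul_pos (mul_pos (by linarith [hN i]) (hL i)) hi) (Xfun_pos ha hx hN)

theorem Xfun_eq_sum_add (x : Fin n → ℝ) :
    Xfun n a x N = ∑ i, (N i - 1) * x i + (∏ j, (1 + x j) - (1 - a)) := by
  unfold Xfun; ring

theorem alpha_dotProduct_sVec (hL : ∀ i, L i ≠ 0) (hN : ∀ i, N i ≠ 0) (z x : Fin n → ℝ) :
    alpha n L N z ⬝ᵥ sVec n a L x N =
      (∑ i, (N i - 1) * x i + ∑ i, x i * ∏ j ∈ univ.erase i, (1 + z j)) / Xfun n a x N := by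
  rw [← sum_add_distrib, dotProduct, sum_div]
  refine sum_congr rfl fun i _ => ?_
  simp only [alpha, sVec]
  field_simp [hL i, hN i]

theorem one_le_alpha_dotProduct_sVec (ha0 : 0 < a) (ha1 : a < 1) (hL : ∀ i, 0 < L i)
    (hN : ∀ i, 1 ≤ N i) {x z : Fin n → ℝ} (hx : ∀ i, 0 ≤ x i) (hz : ∀ i, 0 ≤ z i)
    (hhx : hfun n a x = 1) (hhz : hfun n a z = 1) :
    1 ≤ alpha n L N z ⬝ᵥ sVec n a L x N := by
  rw [alpha_dotProduct_sVec (fun i => (hL i).ne') (fun i => by linarith [hN i]),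
    one_le_div (Xfun_pos ha0 hx hN), Xfun_eq_sum_add]
  linarith [prod_one_add_sub_le_sum_mul_prod_erase ha0 ha1 hx hz hhx hhz]

theorem alpha_dotProduct_sVec_self (ha0 : 0 < a) (hL : ∀ i, 0 < L i)
    (hN : ∀ i, 1 ≤ N i) {z : Fin n → ℝ} (hz : ∀ i, 0 ≤ z i) (hhz : hfun n a z = 1) :
    alpha n L N z ⬝ᵥ sVec n a L z N = 1 := by
  rw [alpha_dotProduct_sVec (fun i => (hL i).ne') (fun i => by linarith [hN i]),
    div_eq_one_iff_eq (Xfun_pos ha0 hz hN).ne', Xfun_eq_sum_add,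
    sum_mul_prod_erase_eq_of_hfun_eq_one hz hhz]

theorem exists_eq_smul_sVec (ha0 : 0 < a) (ha1 : a ≤ 1) (hL : ∀ i, 0 < L i)
    (hN : ∀ i, 1 ≤ N i) {w : Fin n → ℝ} (hw : ∀ k, 0 ≤ w k) {i j : Fin n} (hij : i ≠ j)
    (hi : 0 < w i) (hj : 0 < w j) :
    ∃ z : Fin n → ℝ, (∀ k, 0 ≤ z k) ∧ hfun n a z = 1 ∧ ∃ μ : ℝ, w = μ • sVec n a L z N := by
  have hNL : ∀ k, 0 < N k * L k := fun k => mul_pos (by linarith [hN k]) (hL k)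
  obtain ⟨c, hc, hz⟩ := exists_pos_hfun_smul_eq_one (d := fun k => w k / (N k * L k)) ha0 ha1
    (fun k => div_nonneg (hw k) (hNL k).le) hij (div_pos hi (hNL i)) (div_pos hj (hNL j))
  set z := c • fun k => w k / (N k * L k)
  have hz0 : ∀ k, 0 ≤ z k := fun k => mul_nonneg hc.le (div_nonneg (hw k) (hNL k).le)
  refine ⟨z, hz0, hz, Xfun n a z N / c, funext fun k => ?_⟩
  have hX := Xfun_pos ha0 hz0 hN
  have hzk : z k = c * (w k / (N k * L k)) := rfl
  simp only [sVec, Pi.smul_apply, smul_eq_mul, hzk]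
  field_simp [(hL k).ne', (by linarith [hN k] : N k ≠ 0)]

end Throughput

theorem stmt3_general (n : ℕ) (a : ℝ) (ha0 : 0 < a) (ha1 : a < 1)
    (L Nlo Nhi : Fin n → ℝ) (hL : ∀ i, 0 < L i)
    (hNlo : ∀ i, 1 ≤ Nlo i) (hNhi : ∀ i, Nlo i ≤ Nhi i) :
    Convex ℝ {u : Fin n → ℝ | ∃ lam : ℝ, ∃ x : Fin n → ℝ, 1 < lam ∧
      (∀ i, 0 ≤ x i) ∧ hfun n a x = 1 ∧ u = lam • sVec n a L x Nhi} := by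
  rintro _ ⟨l₁, x₁, hl₁, hx₁, hh₁, rfl⟩ w₂ hw₂ p q hp hq hpq
  rcases hp.eq_or_lt with rfl | hp
  · simpa [show q = 1 by linarith] using hw₂
  obtain ⟨l₂, x₂, hl₂, hx₂, hh₂, rfl⟩ := hw₂
  have hN : ∀ i, 1 ≤ Nhi i := fun i => (hNlo i).trans (hNhi i)
  set w := p • l₁ • sVec n a L x₁ Nhi + q • l₂ • sVec n a L x₂ Nhi
  have hw : ∀ k, p * l₁ * sVec n a L x₁ Nhi k ≤ w k := fun k => by
    have := mul_nonneg hq (mul_nonneg (by linarith : (0 : ℝ) ≤ l₂) (sVec_nonneg ha0 hL hN hx₂ k))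
    simp only [w, Pi.add_apply, Pi.smul_apply, smul_eq_mul]
    linarith
  have hpl : 0 < p * l₁ := mul_pos hp (by linarith)
  obtain ⟨i, j, hij, hi, hj⟩ := exists_pair_pos_of_hfun_eq_one ha0 hx₁ hh₁
  obtain ⟨z, hz, hhz, μ, hwμ⟩ := exists_eq_smul_sVec ha0 ha1.le hL hN
    (fun k => (mul_nonneg hpl.le (sVec_nonneg ha0 hL hN hx₁ k)).trans (hw k)) hij
    ((mul_pos hpl (sVec_pos ha0 hL hN hx₁ hi)).trans_le (hw i))
    ((mul_pos hpl (sVec_pos ha0 hL hN hx₁ hj)).trans_le (hw j))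
  refine ⟨μ, z, ?_, hz, hhz, hwμ⟩
  have hμ := congrArg (alpha n L Nhi z ⬝ᵥ ·) hwμ
  simp only [w, dotProduct_add, dotProduct_smul, smul_eq_mul,
    alpha_dotProduct_sVec_self ha0 hL hN hz hhz, mul_one] at hμ
  have h₁ := one_lt_mul_of_lt_of_le hl₁ (one_le_alpha_dotProduct_sVec ha0 ha1 hL hN hx₁ hz hh₁ hhz)
  have h₂ := one_lt_mul_of_lt_of_le hl₂ (one_le_alpha_dotProduct_sVec ha0 ha1 hL hN hx₂ hz hh₂ hhz)
  nlinarith [mul_lt_mul_of_pos_left h₁ hp, mul_le_mul_of_nonneg_left h₂.le hq]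

theorem stmt3 (n : ℕ) (hn : 2 ≤ n) (a : ℝ) (ha0 : 0 < a) (ha1 : a < 1)
    (L Nlo Nhi : Fin n → ℝ) (hL : ∀ i, 0 < L i)
    (hNlo : ∀ i, 1 ≤ Nlo i) (hNhi : ∀ i, Nlo i ≤ Nhi i) :
    Convex ℝ {u : Fin n → ℝ | ∃ lam : ℝ, ∃ x : Fin n → ℝ, 1 < lam ∧
      (∀ i, 0 ≤ x i) ∧ hfun n a x = 1 ∧ u = lam • sVec n a L x Nhi} :=
  stmt3_general n a ha0 ha1 L Nlo Nhi hL hNlo hNhi
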